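/- Let 𝒢 be a GRN with associated PRN ℛ, and let σ₁, σ₂ be two distinct appendage nodes of 𝒢. There is an appendage path from σ₁ to σ₂ in 𝒢 if and only if there is an appendage path from (σ₁,P) to (σ₂,R) in ℛ; moreover every appendage path from (σ₁,P) to (σ₂,R) in ℛ has the form (σ₁,P) → (τ₁,R) → (τ₁,P) → ⋯ → (τ_m,R) → (τ_m,P) → (σ₂,R) for some appendage path σ₁ → τ₁ → ⋯ → τ_m → σ₂ in 𝒢. -/

import Mathlib

open List Relation

/- In the PRN on `V × Bool`, the node `(v, false)` is the mRNA node `v^R`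
   and `(v, true)` is the protein node `v^P`. -/

/-- Arrow relation of the PRN associated to a GRN with arrow relation `E`:
arrows `(v,R) → (v,P)` for every `v`, and `(u,P) → (v,R)` whenever `E u v`. -/
def prnAdj {V : Type*} (E : V → V → Prop) : V × Bool → V × Bool → Prop :=
  fun a b =>
    (a.1 = b.1 ∧ a.2 = false ∧ b.2 = true) ∨
    (E a.1 b.1 ∧ a.2 = true ∧ b.2 = false)

/-- The lift of a path `σ₁ → ⋯ → σ_m` in the GRN to the path
`(σ₁,R) → (σ₁,P) → ⋯ → (σ_m,R) → (σ_m,P)` in the PRN. -/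
def liftPath {V : Type*} (l : List V) : List (V × Bool) :=
  l.flatMap fun v => [(v, false), (v, true)]

/-- A simple path: a nonempty directed path visiting each node at most once. -/
def IsSimplePath {V : Type*} (E : V → V → Prop) (l : List V) : Prop :=
  l ≠ [] ∧ l.Chain' E ∧ l.Nodup

/-- A simple path from `a` to `b`. -/
def IsSimplePathFrom {V : Type*} (E : V → V → Prop) (a b : V) (l : List V) : Prop :=
  IsSimplePath E l ∧ l.head? = some a ∧ l.getLast? = some b

/-- A node is simple if it lies on some simple path from the input to the output. -/
def IsSimpleNode {V : Type*} (E : V → V → Prop) (ι o v : V) : Prop :=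
  ∃ l, IsSimplePathFrom E ι o l ∧ v ∈ l

/-- A node is super-simple if it lies on every simple path from the input to the output. -/
def IsSuperSimpleNode {V : Type*} (E : V → V → Prop) (ι o v : V) : Prop :=
  ∀ l, IsSimplePathFrom E ι o l → v ∈ l

/-- A node is appendage if it lies on no simple path from the input to the output. -/
def IsAppendageNode {V : Type*} (E : V → V → Prop) (ι o v : V) : Prop :=
  ¬ IsSimpleNode E ι o v

/-- An appendage path from `a` to `b`: a simple path from `a` to `b` each of whose
nodes, except possibly `a` and `b`, is an appendage node. -/
def IsAppendagePath {V : Type*} (E : V → V → Prop) (ι o a b : V) (l : List V) : Prop :=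
  IsSimplePathFrom E a b l ∧ ∀ v ∈ l, v ≠ a → v ≠ b → IsAppendageNode E ι o v

/-- A directed cycle: a nonempty closed directed walk visiting each of its nodes
exactly once (a self-loop is a cycle of length one). -/
def IsCycle {V : Type*} (E : V → V → Prop) (c : List V) : Prop :=
  c ≠ [] ∧ c.Chain' E ∧ c.Nodup ∧
    ∃ a b, c.head? = some a ∧ c.getLast? = some b ∧ E b a

/-- Arrow relation of the appendage subnetwork: the induced subgraph on appendage nodes. -/
def appendageAdj {V : Type*} (E : V → V → Prop) (ι o : V) : V → V → Prop :=
  fun a b => E a b ∧ IsAppendageNode E ι o a ∧ IsAppendageNode E ι o b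

/-- Two appendage nodes are path-equivalent if each is reachable from the other by a
directed path lying entirely within the appendage subnetwork. -/
def PathEquiv {V : Type*} (E : V → V → Prop) (ι o a b : V) : Prop :=
  Relation.ReflTransGen (appendageAdj E ι o) a b ∧
  Relation.ReflTransGen (appendageAdj E ι o) b a

/-- A node `x` is between `a` and `b` if some input-to-output simple path visits
`a`, `x`, `b` in that order. -/
def Between {V : Type*} (E : V → V → Prop) (ι o a x b : V) : Prop :=
  ∃ l, IsSimplePathFrom E ι o l ∧ [a, x, b].Sublist l

/-!
Every arrow of the PRN out of `(v,R)` goes to `(v,P)`, and every arrow into `(v,P)` comes from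
`(v,R)`. Hence a path from `(a,P)` to `(b,R)` alternates between mRNA and protein nodes and is
the lift of a GRN path `a → τ₁ → ⋯ → τ_m → b` with its two end nodes `(a,R)`, `(b,P)` removed;
likewise the `ι^R o^P`-simple paths are exactly the lifts of the `ιo`-simple paths, so `(v,R)`
and `(v,P)` are appendage precisely when `v` is.
-/

lemma List.exists_eq_cons_append_singleton {α : Type*} {l : List α} {a b : α}
    (hh : l.head? = some a) (hl : l.getLast? = some b) (hab : a ≠ b) :
    ∃ ts, l = a :: (ts ++ [b]) := by
  obtain ⟨t, rfl⟩ := List.head?_eq_some_iff.mp hh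
  rcases List.eq_nil_or_concat' t with rfl | ⟨ts, z, rfl⟩
  · exact absurd (by simpa using hl) hab
  · rw [← List.cons_append, List.getLast?_concat, Option.some_inj] at hl
    exact ⟨ts, by rw [hl]⟩

section

variable {V : Type*} {E : V → V → Prop}

@[simp] lemma prnAdj_false_left {a : V} {y : V × Bool} : prnAdj E (a, false) y ↔ y = (a, true) := by
  obtain ⟨c, _ | _⟩ := y <;> simp [prnAdj, eq_comm]

@[simp] lemma prnAdj_true_left {a : V} {y : V × Bool} :
    prnAdj E (a, true) y ↔ ∃ c, y = (c, false) ∧ E a c := by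
  obtain ⟨c, _ | _⟩ := y <;> simp [prnAdj]

@[simp] lemma prnAdj_true_right {x : V × Bool} {b : V} : prnAdj E x (b, true) ↔ x = (b, false) := by
  obtain ⟨c, _ | _⟩ := x <;> simp [prnAdj]

@[simp] lemma liftPath_nil : liftPath ([] : List V) = [] := rfl

@[simp] lemma liftPath_cons (a : V) (l : List V) :
    liftPath (a :: l) = (a, false) :: (a, true) :: liftPath l := rfl

@[simp] lemma liftPath_append (l₁ l₂ : List V) :
    liftPath (l₁ ++ l₂) = liftPath l₁ ++ liftPath l₂ := List.flatMap_append

@[simp] lemma mem_liftPath {l : List V} {v : V} {b : Bool} : (v, b) ∈ liftPath l ↔ v ∈ l := by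
  cases b <;> simp [liftPath]

lemma nodup_liftPath_iff {l : List V} : (liftPath l).Nodup ↔ l.Nodup := by
  induction l with
  | nil => simp
  | cons a l ih => simp [ih]

lemma isChain_liftPath {l : List V} (h : l.IsChain E) : (liftPath l).IsChain (prnAdj E) := by
  induction l with
  | nil => simp
  | cons a l ih =>
    cases l with
    | nil => simp
    | cons c l => simp_all

lemma exists_eq_liftPath_append_of_isChain :
    ∀ {L : List (V × Bool)} {a b : V}, ((a, true) :: L).IsChain (prnAdj E) →
      ((a, true) :: L).getLast? = some (b, false) →
      ∃ ts, L = liftPath ts ++ [(b, false)] ∧ (a :: (ts ++ [b])).IsChain E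
  | [], _, _, _, hl => by simp at hl
  | [x], a, b, hc, hl => by
    obtain rfl : x = (b, false) := by simpa using hl
    exact ⟨[], by simp, by simpa using hc⟩
  | x :: y :: L, a, b, hc, hl => by
    simp only [List.isChain_cons_cons, prnAdj_true_left] at hc
    obtain ⟨⟨c, rfl, hac⟩, hy, hc⟩ := hc
    obtain rfl := prnAdj_false_left.mp hy
    rw [List.getLast?_cons_cons, List.getLast?_cons_cons] at hl
    obtain ⟨ts, rfl, hts⟩ := exists_eq_liftPath_append_of_isChain hc hl
    exact ⟨c :: ts, by simp, List.IsChain.cons_cons hac hts⟩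

lemma exists_eq_liftPath_of_isChain {L : List (V × Bool)} {a b : V}
    (hc : ((a, false) :: L).IsChain (prnAdj E)) (hl : ((a, false) :: L).getLast? = some (b, true)) :
    ∃ l, (a, false) :: L = liftPath l ∧ l.IsChain E ∧ l.head? = some a ∧ l.getLast? = some b := by
  obtain _ | ⟨y, L⟩ := L
  · simp at hl
  simp only [List.isChain_cons_cons, prnAdj_false_left] at hc
  obtain ⟨rfl, hc⟩ := hc
  rcases List.eq_nil_or_concat' L with rfl | ⟨M, z, rfl⟩
  · obtain rfl : a = b := by simpa using hl
    exact ⟨[a], rfl, by simp, rfl, rfl⟩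
  obtain rfl : z = (b, true) := by
    rw [List.getLast?_cons_cons, ← List.cons_append, List.getLast?_concat] at hl
    simpa using hl
  rw [← List.cons_append, List.isChain_append] at hc
  obtain ⟨hM, -, hlast⟩ := hc
  obtain ⟨x, hx⟩ :=
    Option.isSome_iff_exists.mp (List.getLast?_isSome.mpr (List.cons_ne_nil (a, true) M))
  obtain rfl : x = (b, false) := prnAdj_true_right.mp (hlast x hx _ rfl)
  obtain ⟨ts, rfl, hts⟩ := exists_eq_liftPath_append_of_isChain hM hx
  exact ⟨a :: (ts ++ [b]), by simp, hts, rfl, by rw [← List.cons_append, List.getLast?_concat]⟩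

lemma isSimplePathFrom_prnAdj_iff {a b : V} {L : List (V × Bool)} :
    IsSimplePathFrom (prnAdj E) (a, false) (b, true) L ↔
      ∃ l, IsSimplePathFrom E a b l ∧ L = liftPath l := by
  constructor
  · rintro ⟨⟨-, hc, hnd⟩, hh, hl⟩
    obtain ⟨L, rfl⟩ := List.head?_eq_some_iff.mp hh
    obtain ⟨l, hL, hlc, hlh, hll⟩ := exists_eq_liftPath_of_isChain hc hl
    refine ⟨l, ⟨⟨?_, hlc, nodup_liftPath_iff.mp (hL ▸ hnd)⟩, hlh, hll⟩, hL⟩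
    rintro rfl
    simp at hlh
  · rintro ⟨l, ⟨⟨-, hc, hnd⟩, hh, hl⟩, rfl⟩
    obtain ⟨l', rfl⟩ := List.head?_eq_some_iff.mp hh
    refine ⟨⟨by simp, isChain_liftPath hc, nodup_liftPath_iff.mpr hnd⟩, by simp, ?_⟩
    obtain ⟨m, hm⟩ := List.getLast?_eq_some_iff.mp hl
    simp [hm]

lemma isAppendageNode_prnAdj_iff {ι o v : V} {b : Bool} :
    IsAppendageNode (prnAdj E) (ι, false) (o, true) (v, b) ↔ IsAppendageNode E ι o v := by
  simp only [IsAppendageNode, IsSimpleNode, isSimplePathFrom_prnAdj_iff, not_iff_not]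
  constructor
  · rintro ⟨_, ⟨l, hl, rfl⟩, hv⟩
    exact ⟨l, hl, mem_liftPath.mp hv⟩
  · rintro ⟨l, hl, hv⟩
    exact ⟨liftPath l, ⟨l, hl, rfl⟩, mem_liftPath.mpr hv⟩

lemma nodup_cons_liftPath_append_iff {a b : V} {ts : List V} (hab : a ≠ b) :
    ((a, true) :: (liftPath ts ++ [(b, false)])).Nodup ↔ (a :: (ts ++ [b])).Nodup := by
  simp [List.nodup_append, nodup_liftPath_iff, hab]

lemma isSimplePathFrom_prnAdj_true_false_iff {a b : V} (hab : a ≠ b) {L : List (V × Bool)} :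
    IsSimplePathFrom (prnAdj E) (a, true) (b, false) L ↔
      ∃ ts, IsSimplePathFrom E a b (a :: (ts ++ [b])) ∧
        L = (a, true) :: (liftPath ts ++ [(b, false)]) := by
  constructor
  · rintro ⟨⟨-, hc, hnd⟩, hh, hl⟩
    obtain ⟨L, rfl⟩ := List.head?_eq_some_iff.mp hh
    obtain ⟨ts, rfl, hts⟩ := exists_eq_liftPath_append_of_isChain hc hl
    exact ⟨ts, ⟨⟨by simp, hts, (nodup_cons_liftPath_append_iff hab).mp hnd⟩, rfl,
      by rw [← List.cons_append, List.getLast?_concat]⟩, rfl⟩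
  · rintro ⟨ts, ⟨⟨-, hc, hnd⟩, -⟩, rfl⟩
    have hlift : ((a, true) :: (liftPath ts ++ [(b, false)])) <:+: liftPath (a :: (ts ++ [b])) :=
      ⟨[(a, false)], [(b, true)], by simp⟩
    exact ⟨⟨by simp, (isChain_liftPath hc).infix hlift,
      (nodup_cons_liftPath_append_iff hab).mpr hnd⟩, rfl,
      by rw [← List.cons_append, List.getLast?_concat]⟩

lemma isAppendagePath_prnAdj_iff {ι o a b : V} (hab : a ≠ b) {L : List (V × Bool)} :
    IsAppendagePath (prnAdj E) (ι, false) (o, true) (a, true) (b, false) L ↔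
      ∃ ts, IsAppendagePath E ι o a b (a :: (ts ++ [b])) ∧
        L = (a, true) :: (liftPath ts ++ [(b, false)]) := by
  simp only [IsAppendagePath, isSimplePathFrom_prnAdj_true_false_iff hab]
  constructor
  · rintro ⟨⟨ts, hp, rfl⟩, happ⟩
    refine ⟨ts, ⟨hp, fun v hv hva hvb => ?_⟩, rfl⟩
    have hvts : v ∈ ts := by simpa [hva, hvb] using hv
    exact isAppendageNode_prnAdj_iff.mp
      (happ (v, false) (by simp [hvts]) (by simp) (by simpa using hvb))
  · rintro ⟨ts, ⟨hp, happ⟩, rfl⟩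
    refine ⟨⟨ts, hp, rfl⟩, fun ⟨v, c⟩ hv hva hvb => ?_⟩
    have hvts : v ∈ ts := by
      simp only [List.mem_cons, List.mem_append, mem_liftPath] at hv
      tauto
    have hnd : a ∉ ts ∧ b ∉ ts := by
      have hnd := hp.1.2.2
      simp only [List.nodup_cons, List.mem_append, List.nodup_append] at hnd
      grind
    exact isAppendageNode_prnAdj_iff.mpr
      (happ v (by simp [hvts]) (ne_of_mem_of_not_mem hvts hnd.1) (ne_of_mem_of_not_mem hvts hnd.2))

end

theorem stmt_10_general {V : Type*} (E : V → V → Prop) (ι o σ₁ σ₂ : V)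
    (hne : σ₁ ≠ σ₂) :
    ((∃ l, IsAppendagePath E ι o σ₁ σ₂ l) ↔
      (∃ L, IsAppendagePath (prnAdj E) (ι, false) (o, true) (σ₁, true) (σ₂, false) L)) ∧
    (∀ L, IsAppendagePath (prnAdj E) (ι, false) (o, true) (σ₁, true) (σ₂, false) L →
      ∃ ts : List V, IsAppendagePath E ι o σ₁ σ₂ (σ₁ :: (ts ++ [σ₂])) ∧
        L = (σ₁, true) :: (liftPath ts ++ [(σ₂, false)])) := by
  refine ⟨⟨fun ⟨l, hl⟩ => ?_, fun ⟨L, hL⟩ => ?_⟩,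
    fun L hL => (isAppendagePath_prnAdj_iff hne).mp hL⟩
  · obtain ⟨ts, rfl⟩ := List.exists_eq_cons_append_singleton hl.1.2.1 hl.1.2.2 hne
    exact ⟨_, (isAppendagePath_prnAdj_iff hne).mpr ⟨ts, hl, rfl⟩⟩
  · obtain ⟨ts, hl, -⟩ := (isAppendagePath_prnAdj_iff hne).mp hL
    exact ⟨_, hl⟩

/-- For distinct appendage nodes `σ₁, σ₂` of the GRN, there is an
appendage path from `σ₁` to `σ₂` in the GRN iff there is an appendage path from
`(σ₁,P)` to `(σ₂,R)` in the PRN; moreover every appendage path from `(σ₁,P)` to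
`(σ₂,R)` in the PRN has the form
`(σ₁,P) → (τ₁,R) → (τ₁,P) → ⋯ → (τ_m,R) → (τ_m,P) → (σ₂,R)`
for some appendage path `σ₁ → τ₁ → ⋯ → τ_m → σ₂` in the GRN. -/
theorem stmt_10 {V : Type*} [Fintype V] (E : V → V → Prop) (ι o σ₁ σ₂ : V)
    (hne : σ₁ ≠ σ₂)
    (h₁ : IsAppendageNode E ι o σ₁) (h₂ : IsAppendageNode E ι o σ₂) :
    ((∃ l, IsAppendagePath E ι o σ₁ σ₂ l) ↔
      (∃ L, IsAppendagePath (prnAdj E) (ι, false) (o, true) (σ₁, true) (σ₂, false) L)) ∧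
    (∀ L, IsAppendagePath (prnAdj E) (ι, false) (o, true) (σ₁, true) (σ₂, false) L →
      ∃ ts : List V, IsAppendagePath E ι o σ₁ σ₂ (σ₁ :: (ts ++ [σ₂])) ∧
        L = (σ₁, true) :: (liftPath ts ++ [(σ₂, false)])) :=
  stmt_10_general E ι o σ₁ σ₂ hne
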